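/- Let μ > 0 and assume the set Z* of Nash equilibria is nonempty. Let F : Δ_m × Δ_n → Δ_m × Δ_n be the map sending a reference profile r to the unique saddle point of the regularized objective f_r. Then for every initial reference r¹ ∈ Δ_m × Δ_n, the sequence r^{n+1} = F(r^n) converges to Z*, i.e. inf_{z* ∈ Z*} ‖r^n − z*‖₂ → 0 as n → ∞. -/

import Mathlib

open Finset

/-- Squared Euclidean norm of a vector in `ℝ^d`. -/
noncomputable def sqnorm {d : ℕ} (v : Fin d → ℝ) : ℝ := ∑ i, (v i) ^ 2

/-- Euclidean norm `‖·‖₂` of a vector in `ℝ^d`. -/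
noncomputable def enorm2 {d : ℕ} (v : Fin d → ℝ) : ℝ := Real.sqrt (sqnorm v)

/-- Euclidean inner product on `ℝ^d`. -/
noncomputable def ip {d : ℕ} (u v : Fin d → ℝ) : ℝ := ∑ i, u i * v i

/-- The max-player's payoff `⟨x, A y⟩` in the two-player zero-sum game with payoff matrix `A`. -/
noncomputable def pay {m n : ℕ} (A : Matrix (Fin m) (Fin n) ℝ)
    (x : Fin m → ℝ) (y : Fin n → ℝ) : ℝ := ip x (A.mulVec y)

/-- `(x, y)` is a Nash equilibrium of the zero-sum game with payoff matrix `A`: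
`⟨x, A y'⟩ ≤ ⟨x, A y⟩ ≤ ⟨x', A y⟩` for all `x' ∈ Δ_m`, `y' ∈ Δ_n`. -/
def IsNE {m n : ℕ} (A : Matrix (Fin m) (Fin n) ℝ)
    (x : Fin m → ℝ) (y : Fin n → ℝ) : Prop :=
  x ∈ stdSimplex ℝ (Fin m) ∧ y ∈ stdSimplex ℝ (Fin n) ∧
  ∀ x' ∈ stdSimplex ℝ (Fin m), ∀ y' ∈ stdSimplex ℝ (Fin n),
    pay A x y' ≤ pay A x y ∧ pay A x y ≤ pay A x' y

/-- The regularized objective `f_r(x,y) = ⟨x, A y⟩ + (μ/2)‖x − r₀‖₂² − (μ/2)‖y − r₁‖₂²`. -/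
noncomputable def freg {m n : ℕ} (A : Matrix (Fin m) (Fin n) ℝ) (μ : ℝ)
    (r₀ : Fin m → ℝ) (r₁ : Fin n → ℝ) (x : Fin m → ℝ) (y : Fin n → ℝ) : ℝ :=
  pay A x y + (μ / 2) * sqnorm (x - r₀) - (μ / 2) * sqnorm (y - r₁)

/-- `(xs, ys)` is a saddle point of `f_r` on `Δ_m × Δ_n`. -/
def IsSaddle {m n : ℕ} (A : Matrix (Fin m) (Fin n) ℝ) (μ : ℝ)
    (r₀ : Fin m → ℝ) (r₁ : Fin n → ℝ) (xs : Fin m → ℝ) (ys : Fin n → ℝ) : Prop :=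
  xs ∈ stdSimplex ℝ (Fin m) ∧ ys ∈ stdSimplex ℝ (Fin n) ∧
  ∀ x ∈ stdSimplex ℝ (Fin m), ∀ y ∈ stdSimplex ℝ (Fin n),
    freg A μ r₀ r₁ xs y ≤ freg A μ r₀ r₁ xs ys ∧
    freg A μ r₀ r₁ xs ys ≤ freg A μ r₀ r₁ x ys

/-! `F` is the proximal-point map of the game. Comparing the optimality conditions of `F r`
with the equilibrium inequalities of any `z ∈ Z*` gives the Fejér inequality
`‖F r - z‖² + ‖F r - r‖² ≤ ‖r - z‖²`, so `‖r^k - z‖` is non-increasing for every `z ∈ Z*`.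
By compactness some subsequence of `(r^k, r^{k+1})` converges to a pair `(p, q)`, and
`q = F p` since the saddle-point relation is closed. Both `‖p - z‖` and `‖q - z‖` equal
`lim ‖r^k - z‖`, so the Fejér inequality forces `q = p`; a fixed point of `F` is an
equilibrium. The distance from `r^k` to `Z*` is then non-increasing and tends to `0` along
the subsequence. -/

open Filter Topology

lemma sqnorm_nonneg {d : ℕ} (v : Fin d → ℝ) : 0 ≤ sqnorm v :=
  sum_nonneg fun _ _ => sq_nonneg _

lemma sqnorm_sub_comm {d : ℕ} (a b : Fin d → ℝ) : sqnorm (a - b) = sqnorm (b - a) :=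
  sum_congr rfl fun i _ => by simp only [Pi.sub_apply]; ring

@[simp]
lemma sqnorm_zero {d : ℕ} : sqnorm (0 : Fin d → ℝ) = 0 := by
  simp [sqnorm]

lemma sqnorm_eq_zero_iff {d : ℕ} {v : Fin d → ℝ} : sqnorm v = 0 ↔ v = 0 := by
  rw [sqnorm, Fintype.sum_eq_zero_iff_of_nonneg fun i => sq_nonneg (v i)]
  simp [funext_iff]

lemma sqnorm_add_smul {d : ℕ} (a b : Fin d → ℝ) (t : ℝ) :
    sqnorm (a + t • b) = sqnorm a + 2 * t * ip a b + t ^ 2 * sqnorm b := by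
  simp only [sqnorm, ip, mul_sum, ← sum_add_distrib]
  exact sum_congr rfl fun i _ => by simp only [Pi.add_apply, Pi.smul_apply, smul_eq_mul]; ring

lemma nonneg_of_forall_mul_add_sq_mul_nonneg {L Q : ℝ}
    (h : ∀ t : ℝ, 0 < t → t ≤ 1 → 0 ≤ t * L + t ^ 2 * Q) : 0 ≤ L := by
  have hlim : Tendsto (fun t => L + t * Q) (𝓝[>] 0) (𝓝 L) := by
    have : Continuous fun t : ℝ => L + t * Q := by fun_prop
    simpa using (this.tendsto 0).mono_left nhdsWithin_le_nhds
  refine ge_of_tendsto hlim ?_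
  filter_upwards [Ioc_mem_nhdsGT one_pos] with t ⟨ht0, ht1⟩
  have := h t ht0 ht1
  rw [← mul_nonneg_iff_of_pos_left ht0]
  linarith

theorem ConvexOn.add_sqnorm_sub_le_of_isMinOn {d : ℕ} {S : Set (Fin d → ℝ)}
    {φ : (Fin d → ℝ) → ℝ} (hφ : ConvexOn ℝ S φ) {μ : ℝ} {r s x : Fin d → ℝ}
    (hmin : IsMinOn (fun x => φ x + μ / 2 * sqnorm (x - r)) S s) (hs : s ∈ S) (hx : x ∈ S) :
    φ s + μ / 2 * sqnorm (s - r) + μ / 2 * sqnorm (x - s)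
      ≤ φ x + μ / 2 * sqnorm (x - r) := by
  have hshift : ∀ t : ℝ, s + t • (x - s) - r = (s - r) + t • (x - s) := fun t => by abel
  have hslope : 0 ≤ φ x - φ s + μ * ip (s - r) (x - s) := by
    refine nonneg_of_forall_mul_add_sq_mul_nonneg (Q := μ / 2 * sqnorm (x - s))
      fun t ht0 ht1 => ?_
    have hseg : (1 - t) • s + t • x = s + t • (x - s) := by module
    have h1t : 0 ≤ 1 - t := sub_nonneg.2 ht1
    have hconv := hφ.2 hs hx h1t ht0.le (sub_add_cancel 1 t)
    have hle := hmin (hφ.1 hs hx h1t ht0.le (sub_add_cancel 1 t))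
    simp only [hseg, smul_eq_mul, Set.mem_ofPred_eq] at hconv hle
    rw [hshift, sqnorm_add_smul] at hle
    linarith
  have hend : x - r = (s - r) + (1 : ℝ) • (x - s) := by module
  rw [hend, sqnorm_add_smul]
  linarith

lemma tendsto_sInf_image_of_antitone_of_subseq {X : Type*} {Z : Set X} {u : ℕ → X}
    {d : X → X → ℝ} (hd : ∀ x y, 0 ≤ d x y)
    (hmono : ∀ k, ∀ z ∈ Z, d (u (k + 1)) z ≤ d (u k) z)
    {p : X} (hp : p ∈ Z) {φ : ℕ → ℕ} (hφ : Tendsto φ atTop atTop)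
    (hsub : Tendsto (fun k => d (u (φ k)) p) atTop (𝓝 0)) :
    Tendsto (fun k => sInf (d (u k) '' Z)) atTop (𝓝 0) := by
  have hbdd : ∀ k, BddBelow (d (u k) '' Z) := fun k =>
    ⟨0, by rintro _ ⟨z, -, rfl⟩; exact hd _ _⟩
  have hanti : Antitone fun k => sInf (d (u k) '' Z) := antitone_nat_of_succ_le fun k =>
    le_csInf (Set.image_nonempty.2 ⟨p, hp⟩) <| by
      rintro _ ⟨z, hz, rfl⟩
      exact (csInf_le (hbdd _) ⟨z, hz, rfl⟩).trans (hmono k z hz)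
  have hnonneg : ∀ k, 0 ≤ sInf (d (u k) '' Z) := fun k =>
    Real.sInf_nonneg <| by rintro _ ⟨z, -, rfl⟩; exact hd _ _
  have hlim := tendsto_atTop_ciInf hanti ⟨0, by rintro _ ⟨k, rfl⟩; exact hnonneg k⟩
  have hsub' : Tendsto (fun k => sInf (d (u (φ k)) '' Z)) atTop (𝓝 0) :=
    tendsto_of_tendsto_of_tendsto_of_le_of_le tendsto_const_nhds hsub (fun k => hnonneg _)
      fun k => csInf_le (hbdd _) ⟨p, hp, rfl⟩
  rwa [tendsto_nhds_unique (hlim.comp hφ) hsub'] at hlim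

section Game

variable {m n : ℕ} {A : Matrix (Fin m) (Fin n) ℝ} {μ : ℝ}

lemma convexOn_pay_left {s : Set (Fin m → ℝ)} (hs : Convex ℝ s) (y : Fin n → ℝ) :
    ConvexOn ℝ s fun x => pay A x y :=
  ((dotProductBilin ℝ ℝ).flip (A.mulVec y)).convexOn hs

lemma concaveOn_pay_right {s : Set (Fin n → ℝ)} (hs : Convex ℝ s) (x : Fin m → ℝ) :
    ConcaveOn ℝ s (pay A x) :=
  (dotProductBilin ℝ ℝ x ∘ₗ A.mulVecLin).concaveOn hs

@[fun_prop]
lemma Continuous.freg {X : Type*} [TopologicalSpace X] {r₀ x : X → Fin m → ℝ}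
    {r₁ y : X → Fin n → ℝ} (hr₀ : Continuous r₀) (hr₁ : Continuous r₁)
    (hx : Continuous x) (hy : Continuous y) :
    Continuous fun t => freg A μ (r₀ t) (r₁ t) (x t) (y t) := by
  unfold _root_.freg pay ip sqnorm Matrix.mulVec dotProduct
  fun_prop

noncomputable def sqdist (p q : (Fin m → ℝ) × (Fin n → ℝ)) : ℝ :=
  sqnorm (p.1 - q.1) + sqnorm (p.2 - q.2)

lemma sqdist_nonneg (p q : (Fin m → ℝ) × (Fin n → ℝ)) : 0 ≤ sqdist p q :=
  add_nonneg (sqnorm_nonneg _) (sqnorm_nonneg _)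

@[simp]
lemma sqdist_self (p : (Fin m → ℝ) × (Fin n → ℝ)) : sqdist p p = 0 := by
  simp [sqdist]

lemma eq_of_sqdist_le_zero {p q : (Fin m → ℝ) × (Fin n → ℝ)} (h : sqdist p q ≤ 0) :
    p = q := by
  have h₁ := sqnorm_nonneg (p.1 - q.1)
  have h₂ := sqnorm_nonneg (p.2 - q.2)
  rw [sqdist] at h
  exact Prod.ext (sub_eq_zero.1 (sqnorm_eq_zero_iff.1 (by linarith)))
    (sub_eq_zero.1 (sqnorm_eq_zero_iff.1 (by linarith)))

@[fun_prop]
lemma Continuous.sqdist {X : Type*} [TopologicalSpace X]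
    {p q : X → (Fin m → ℝ) × (Fin n → ℝ)} (hp : Continuous p) (hq : Continuous q) :
    Continuous fun t => sqdist (p t) (q t) := by
  unfold _root_.sqdist sqnorm
  fun_prop

variable {r₀ xs x : Fin m → ℝ} {r₁ ys y : Fin n → ℝ}

lemma IsSaddle.pay_add_sqnorm_le_left (h : IsSaddle A μ r₀ r₁ xs ys)
    (hx : x ∈ stdSimplex ℝ (Fin m)) :
    pay A xs ys + μ / 2 * sqnorm (xs - r₀) + μ / 2 * sqnorm (x - xs)
      ≤ pay A x ys + μ / 2 * sqnorm (x - r₀) := by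
  refine (convexOn_pay_left (convex_stdSimplex ℝ _) ys).add_sqnorm_sub_le_of_isMinOn
    (fun x' hx' => ?_) h.1 hx
  have := (h.2.2 x' hx' ys h.2.1).2
  simp only [_root_.freg] at this
  simp only [Set.mem_ofPred_eq]
  linarith

lemma IsSaddle.pay_add_sqnorm_le_right (h : IsSaddle A μ r₀ r₁ xs ys)
    (hy : y ∈ stdSimplex ℝ (Fin n)) :
    -pay A xs ys + μ / 2 * sqnorm (ys - r₁) + μ / 2 * sqnorm (y - ys)
      ≤ -pay A xs y + μ / 2 * sqnorm (y - r₁) := by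
  refine (concaveOn_pay_right (convex_stdSimplex ℝ _) xs).neg.add_sqnorm_sub_le_of_isMinOn
    (fun y' hy' => ?_) h.2.1 hy
  have := (h.2.2 xs h.1 y' hy').1
  simp only [_root_.freg] at this
  simp only [Set.mem_ofPred_eq, Pi.neg_apply]
  linarith

lemma IsSaddle.sqdist_add_sqdist_le (hμ : 0 < μ) {r s z : (Fin m → ℝ) × (Fin n → ℝ)}
    (h : IsSaddle A μ r.1 r.2 s.1 s.2) (hz : IsNE A z.1 z.2) :
    sqdist s z + sqdist s r ≤ sqdist r z := by
  have hx := h.pay_add_sqnorm_le_left hz.1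
  have hy := h.pay_add_sqnorm_le_right hz.2.1
  have hne := hz.2.2 s.1 h.1 s.2 h.2.1
  have hsum : μ / 2 * (sqdist s z + sqdist s r) ≤ μ / 2 * sqdist r z := by
    simp only [sqdist, sqnorm_sub_comm s.1 z.1, sqnorm_sub_comm s.2 z.2,
      sqnorm_sub_comm r.1 z.1, sqnorm_sub_comm r.2 z.2]
    linarith [hne.1, hne.2]
  exact le_of_mul_le_mul_left hsum (half_pos hμ)

lemma IsSaddle.sqdist_le (hμ : 0 < μ) {r s z : (Fin m → ℝ) × (Fin n → ℝ)}
    (h : IsSaddle A μ r.1 r.2 s.1 s.2) (hz : IsNE A z.1 z.2) : sqdist s z ≤ sqdist r z := by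
  linarith [h.sqdist_add_sqdist_le hμ hz, sqdist_nonneg s r]

lemma IsSaddle.isNE_of_self (h : IsSaddle A μ x y x y) : IsNE A x y := by
  refine ⟨h.1, h.2.1, fun x' hx' y' hy' => ⟨?_, ?_⟩⟩
  · have := h.pay_add_sqnorm_le_right hy'
    rw [sub_self, sqnorm_zero] at this
    linarith
  · have := h.pay_add_sqnorm_le_left hx'
    rw [sub_self, sqnorm_zero] at this
    linarith

lemma isClosed_setOf_isSaddle :
    IsClosed {q : ((Fin m → ℝ) × (Fin n → ℝ)) × ((Fin m → ℝ) × (Fin n → ℝ)) |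
      IsSaddle A μ q.1.1 q.1.2 q.2.1 q.2.2} := by
  simp only [IsSaddle, Set.ofPred_and, Set.ofPred_forall]
  refine .inter ?_ (.inter ?_ (isClosed_biInter fun x _ => isClosed_biInter fun y _ => ?_))
  · exact (isClosed_stdSimplex ℝ (Fin m)).preimage continuous_snd.fst
  · exact (isClosed_stdSimplex ℝ (Fin n)).preimage continuous_snd.snd
  · exact (isClosed_le (by fun_prop) (by fun_prop)).inter (isClosed_le (by fun_prop) (by fun_prop))

lemma exists_isNE_tendsto_subseq (hμ : 0 < μ)
    (hZ : ∃ z : (Fin m → ℝ) × (Fin n → ℝ), IsNE A z.1 z.2)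
    {u : ℕ → (Fin m → ℝ) × (Fin n → ℝ)}
    (hu : ∀ k, u k ∈ stdSimplex ℝ (Fin m) ×ˢ stdSimplex ℝ (Fin n))
    (hsad : ∀ k, IsSaddle A μ (u k).1 (u k).2 (u (k + 1)).1 (u (k + 1)).2) :
    ∃ p : (Fin m → ℝ) × (Fin n → ℝ), IsNE A p.1 p.2 ∧
      ∃ φ : ℕ → ℕ, StrictMono φ ∧ Tendsto (u ∘ φ) atTop (𝓝 p) := by
  obtain ⟨z, hz⟩ := hZ
  have hK := (isCompact_stdSimplex ℝ (Fin m)).prod (isCompact_stdSimplex ℝ (Fin n))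
  obtain ⟨⟨p, q⟩, -, φ, hφ, hlim⟩ :=
    (hK.prod hK).tendsto_subseq (x := fun k => (u k, u (k + 1))) fun k => ⟨hu k, hu (k + 1)⟩
  have hpq : IsSaddle A μ p.1 p.2 q.1 q.2 :=
    isClosed_setOf_isSaddle.mem_of_tendsto hlim (Eventually.of_forall fun k => hsad (φ k))
  have hanti : Antitone fun k => sqdist (u k) z :=
    antitone_nat_of_succ_le fun k => (hsad k).sqdist_le hμ hz
  have hL := tendsto_atTop_ciInf hanti ⟨0, by rintro _ ⟨k, rfl⟩; exact sqdist_nonneg _ _⟩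
  have hp : sqdist p z = ⨅ k, sqdist (u k) z :=
    tendsto_nhds_unique (((continuous_fst.sqdist continuous_const).tendsto (p, q)).comp hlim)
      (hL.comp hφ.tendsto_atTop)
  have hq : sqdist q z = ⨅ k, sqdist (u k) z :=
    tendsto_nhds_unique (((continuous_snd.sqdist continuous_const).tendsto (p, q)).comp hlim)
      (hL.comp ((tendsto_add_atTop_nat 1).comp hφ.tendsto_atTop))
  obtain rfl : q = p := eq_of_sqdist_le_zero <| by
    linarith [hpq.sqdist_add_sqdist_le hμ hz]
  exact ⟨q, hpq.isNE_of_self, φ, hφ, (continuous_fst.tendsto _).comp hlim⟩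

end Game

theorem rt_reference_sequence_converges_to_NE_general
    (m n : ℕ) (A : Matrix (Fin m) (Fin n) ℝ)
    (μ : ℝ) (hμ : 0 < μ)
    (hNEne : ∃ p : (Fin m → ℝ) × (Fin n → ℝ), IsNE A p.1 p.2)
    (F : (Fin m → ℝ) × (Fin n → ℝ) → (Fin m → ℝ) × (Fin n → ℝ))
    (hF : ∀ p ∈ stdSimplex ℝ (Fin m) ×ˢ stdSimplex ℝ (Fin n),
      IsSaddle A μ p.1 p.2 (F p).1 (F p).2)
    (r1 : (Fin m → ℝ) × (Fin n → ℝ))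
    (hr1 : r1 ∈ stdSimplex ℝ (Fin m) ×ˢ stdSimplex ℝ (Fin n))
    (seq : ℕ → (Fin m → ℝ) × (Fin n → ℝ))
    (hseq0 : seq 0 = r1)
    (hseqrec : ∀ k, seq (k + 1) = F (seq k)) :
    Filter.Tendsto
      (fun k => sInf ((fun z : (Fin m → ℝ) × (Fin n → ℝ) =>
        Real.sqrt (sqnorm ((seq k).1 - z.1) + sqnorm ((seq k).2 - z.2))) ''
        {p | IsNE A p.1 p.2}))
      Filter.atTop (nhds 0) := by
  have hK : ∀ k, seq k ∈ stdSimplex ℝ (Fin m) ×ˢ stdSimplex ℝ (Fin n) := by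
    intro k
    induction k with
    | zero => exact hseq0 ▸ hr1
    | succ k ih => exact hseqrec k ▸ ⟨(hF _ ih).1, (hF _ ih).2.1⟩
  have hsad : ∀ k, IsSaddle A μ (seq k).1 (seq k).2 (seq (k + 1)).1 (seq (k + 1)).2 :=
    fun k => hseqrec k ▸ hF _ (hK k)
  obtain ⟨p, hp, φ, hφ, hlim⟩ := exists_isNE_tendsto_subseq hμ hNEne hK hsad
  refine tendsto_sInf_image_of_antitone_of_subseq (d := fun a b => √(sqdist a b))
    (fun _ _ => Real.sqrt_nonneg _)
    (fun k z hz => Real.sqrt_le_sqrt ((hsad k).sqdist_le hμ hz)) hp hφ.tendsto_atTop ?_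
  simpa [Function.comp_def] using
    ((by fun_prop : Continuous fun a => √(sqdist a p)).tendsto p).comp hlim

/-- if the set `Z*` of Nash equilibria is nonempty and `F` maps each reference
profile `r ∈ Δ_m × Δ_n` to the (unique) saddle point of the regularized objective `f_r`, then
for every initial reference `r¹ ∈ Δ_m × Δ_n` the sequence `r^{n+1} = F(r^n)` converges to `Z*`:
`inf_{z* ∈ Z*} ‖r^n − z*‖₂ → 0`. -/
theorem rt_reference_sequence_converges_to_NE
    (m n : ℕ) (hm : 1 ≤ m) (hn : 1 ≤ n) (A : Matrix (Fin m) (Fin n) ℝ)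
    (μ : ℝ) (hμ : 0 < μ)
    (hNEne : ∃ p : (Fin m → ℝ) × (Fin n → ℝ), IsNE A p.1 p.2)
    (F : (Fin m → ℝ) × (Fin n → ℝ) → (Fin m → ℝ) × (Fin n → ℝ))
    (hF : ∀ p ∈ stdSimplex ℝ (Fin m) ×ˢ stdSimplex ℝ (Fin n),
      IsSaddle A μ p.1 p.2 (F p).1 (F p).2)
    (r1 : (Fin m → ℝ) × (Fin n → ℝ))
    (hr1 : r1 ∈ stdSimplex ℝ (Fin m) ×ˢ stdSimplex ℝ (Fin n))
    (seq : ℕ → (Fin m → ℝ) × (Fin n → ℝ))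
    (hseq0 : seq 0 = r1)
    (hseqrec : ∀ k, seq (k + 1) = F (seq k)) :
    Filter.Tendsto
      (fun k => sInf ((fun z : (Fin m → ℝ) × (Fin n → ℝ) =>
        Real.sqrt (sqnorm ((seq k).1 - z.1) + sqnorm ((seq k).2 - z.2))) ''
        {p | IsNE A p.1 p.2}))
      Filter.atTop (nhds 0) :=
  rt_reference_sequence_converges_to_NE_general m n A μ hμ hNEne F hF r1 hr1 seq hseq0 hseqrec
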